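/- arXiv:2503.11791 — 3 statements merged into one kernel-verified Lean document; each statement's English description precedes it below -/
import Mathlib

section
/- Let Γ : ℝ → ℝ be locally Lipschitz, strictly increasing with Γ(0) = 0, and let φ : ℝ≥0 → ℝ be continuous with φ(t) ≥ 1. If z : ℝ≥0 → ℝ is differentiable, z(0) ≥ 0, and ż(t) ≥ -φ(t) Γ(z(t)) for all t ≥ 0, then z(t) ≥ 0 for all t ≥ 0. -/
/-- A differential inequality `ż ≥ -φ(t) Γ(z)` with a locally Lipschitz class K
function `Γ` and a continuous relaxation factor `φ ≥ 1` preserves nonnegativity. -/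
theorem relaxed_comparison_nonneg
    (Γ : ℝ → ℝ) (hΓlip : LocallyLipschitz Γ) (hΓmono : StrictMono Γ)
    (hΓ0 : Γ 0 = 0)
    (φ : ℝ → ℝ) (hφcont : Continuous φ) (hφ1 : ∀ t, 0 ≤ t → 1 ≤ φ t)
    (z : ℝ → ℝ) (hz : Differentiable ℝ z) (hz0 : 0 ≤ z 0)
    (hineq : ∀ t, 0 ≤ t → deriv z t ≥ -φ t * Γ (z t)) :
    ∀ t, 0 ≤ t → 0 ≤ z t := by
  intro T hT
  by_contra hneg
  push_neg at hneg
  have hTpos : 0 < T := by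
    rcases eq_or_lt_of_le hT with h | h
    · exfalso; rw [← h] at hneg; linarith
    · exact h
  set S : Set ℝ := {t | t ∈ Set.Icc 0 T ∧ 0 ≤ z t} with hSdef
  have hS0 : (0:ℝ) ∈ S := ⟨⟨le_refl 0, hT⟩, hz0⟩
  have hSne : S.Nonempty := ⟨0, hS0⟩
  have hSbdd : BddAbove S := ⟨T, fun t ht => ht.1.2⟩
  have hSclosed : IsClosed S := by
    have hEq : S = Set.Icc 0 T ∩ z ⁻¹' Set.Ici 0 := by
      ext t; simp [hSdef, Set.mem_Icc, and_assoc]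
    rw [hEq]
    exact isClosed_Icc.inter (isClosed_Ici.preimage hz.continuous)
  set s := sSup S with hsdef
  have hsS : s ∈ S := hSclosed.csSup_mem hSne hSbdd
  have hs0 : 0 ≤ s := hsS.1.1
  have hsT : s ≤ T := hsS.1.2
  have hzs : 0 ≤ z s := hsS.2
  have hsltT : s < T := by
    rcases eq_or_lt_of_le hsT with h | h
    · exfalso; rw [h] at hzs; linarith
    · exact h
  have hlt : ∀ t, s < t → t ≤ T → z t < 0 := by
    intro t hst htT
    by_contra h
    push_neg at h
    have htS : t ∈ S := ⟨⟨le_trans hs0 hst.le, htT⟩, h⟩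
    exact absurd (le_csSup hSbdd htS) (not_le.mpr hst)
  have hzs0 : z s = 0 := by
    refine le_antisymm ?_ hzs
    have htend : Filter.Tendsto z (nhdsWithin s (Set.Ioi s)) (nhds (z s)) :=
      (hz.continuous.continuousAt).continuousWithinAt.tendsto
    refine le_of_tendsto htend ?_
    filter_upwards [Ioo_mem_nhdsGT_of_mem (Set.left_mem_Ico.mpr hsltT)] with t ht
    exact (hlt t ht.1 ht.2.le).le
  have hmono : MonotoneOn z (Set.Icc s T) := by
    apply monotoneOn_of_deriv_nonneg (convex_Icc s T) hz.continuous.continuousOn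
      (fun t _ => (hz t).differentiableWithinAt)
    intro t ht
    rw [interior_Icc] at ht
    have hzt : z t < 0 := hlt t ht.1 ht.2.le
    have h1 : Γ (z t) < 0 := by rw [← hΓ0]; exact hΓmono hzt
    have h2 : 1 ≤ φ t := hφ1 t (le_trans hs0 ht.1.le)
    have h3 := hineq t (le_trans hs0 ht.1.le)
    nlinarith
  have hfin := hmono (Set.left_mem_Icc.mpr hsT) (Set.right_mem_Icc.mpr hsT) hsT
  rw [hzs0] at hfin
  linarith
end

section
/- Let h : ℝⁿ → ℝ be C¹ along a C¹ trajectory x(t), let Γ be a locally Lipschitz class K function, and define ψ₁(t) = (d/dt) h(x(t)) + Γ(h(x(t))). If h(x(0)) ≥ 0 and ψ₁(t) ≥ 0 for all t ≥ 0, then h(x(t)) ≥ 0 for all t ≥ 0. -/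
/-!
Let `g(t) = h(x(t))`, so that `ψ₁ ≥ 0` reads `g' ≥ -Γ(g)`. On a compact time interval `g` takes
values in a compact set on which `Γ` is `K`-Lipschitz, and `Γ 0 = 0` gives `Γ(g) ≤ K |g|`; hence
`g' ≥ K g` wherever `g < 0`. This replaces the comparison with `ż = -Γ(z)`, `z(0) = 0` by a linear
one: starting below it, `-g` can never reach a barrier `c e^{(K+1)t}` with `c > 0`, since at a
contact point the barrier grows strictly faster. Letting the barrier pass through `-g(t)/2` at a
time `t` where `g(t) < 0` gives a contradiction.
-/

open Set

theorem LocallyLipschitz.exists_norm_le_mul_norm_of_isCompact {E F : Type*}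
    [SeminormedAddCommGroup E] [SeminormedAddCommGroup F] {Γ : E → F}
    (hΓ : LocallyLipschitz Γ) (hΓ0 : Γ 0 = 0) {s : Set E} (hs : IsCompact s) :
    ∃ K : ℝ, ∀ y ∈ s, ‖Γ y‖ ≤ K * ‖y‖ := by
  obtain ⟨K, hK⟩ := (hΓ.locallyLipschitzOn (s := insert 0 s)).exists_lipschitzOnWith_of_compact
    (hs.insert 0)
  refine ⟨K, fun y hy => ?_⟩
  simpa [dist_eq_norm, hΓ0] using hK.dist_le_mul y (mem_insert_of_mem 0 hy) 0 (mem_insert 0 s)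

theorem nonneg_of_deriv_right_ge_mul_of_neg {g g' : ℝ → ℝ} {a b K : ℝ}
    (hg : ContinuousOn g (Icc a b)) (hg' : ∀ t ∈ Ico a b, HasDerivWithinAt g (g' t) (Ici t) t)
    (ha : 0 ≤ g a) (hbound : ∀ t ∈ Ico a b, g t < 0 → K * g t ≤ g' t) :
    ∀ t ∈ Icc a b, 0 ≤ g t := by
  intro y hy
  by_contra! hgy
  set c := -g y / 2 with hc_def
  have hc : 0 < c := by linarith
  set B : ℝ → ℝ := fun t => c * Real.exp ((K + 1) * (t - y))
  have hB : ∀ t, HasDerivAt B ((K + 1) * B t) t := by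
    intro t
    simpa [B, mul_comm, mul_left_comm] using
      (((hasDerivAt_id t).sub_const y).const_mul (K + 1)).exp.const_mul c
  have hB_pos : ∀ t, 0 < B t := fun t => mul_pos hc (Real.exp_pos _)
  have hcontact : ∀ t ∈ Ico a b, (-g) t = B t → -g' t < (K + 1) * B t := by
    intro t ht hgt
    rw [Pi.neg_apply] at hgt
    have hKg := hbound t ht (by linarith [hB_pos t])
    rw [show g t = -B t by linarith] at hKg
    linarith [hB_pos t]
  have hfence : -g y ≤ B y :=
    image_le_of_deriv_right_lt_deriv_boundary hg.neg (fun t ht => (hg' t ht).neg)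
      (by rw [Pi.neg_apply]; linarith [hB_pos a]) hB hcontact hy
  simp only [B, sub_self, mul_zero, Real.exp_zero, mul_one] at hfence
  linarith

theorem nonneg_of_deriv_right_ge_neg_comp {g g' Γ : ℝ → ℝ} {a b : ℝ}
    (hg : ContinuousOn g (Icc a b)) (hg' : ∀ t ∈ Ico a b, HasDerivWithinAt g (g' t) (Ici t) t)
    (hΓ : LocallyLipschitz Γ) (hΓ0 : Γ 0 = 0) (ha : 0 ≤ g a)
    (hbound : ∀ t ∈ Ico a b, -Γ (g t) ≤ g' t) :
    ∀ t ∈ Icc a b, 0 ≤ g t := by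
  obtain ⟨K, hK⟩ :=
    hΓ.exists_norm_le_mul_norm_of_isCompact hΓ0 (isCompact_Icc.image_of_continuousOn hg)
  refine nonneg_of_deriv_right_ge_mul_of_neg (K := K) hg hg' ha fun t ht hgt => ?_
  have hΓK : |Γ (g t)| ≤ K * |g t| := hK (g t) (mem_image_of_mem g (Ico_subset_Icc_self ht))
  rw [abs_of_neg hgt] at hΓK
  linarith [le_abs_self (Γ (g t)), hbound t ht]

theorem hocbf_induction_step_general
    (n : ℕ) (h : (Fin n → ℝ) → ℝ) (x : ℝ → (Fin n → ℝ))
    (hh : ContDiff ℝ 1 h) (hx : ContDiff ℝ 1 x)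
    (Γ : ℝ → ℝ) (hΓlip : LocallyLipschitz Γ)
    (hΓ0 : Γ 0 = 0)
    (ψ₁ : ℝ → ℝ)
    (hψ₁ : ∀ t, ψ₁ t = deriv (fun s => h (x s)) t + Γ (h (x t)))
    (h0 : 0 ≤ h (x 0))
    (hψ₁nonneg : ∀ t, 0 ≤ t → 0 ≤ ψ₁ t) :
    ∀ t, 0 ≤ t → 0 ≤ h (x t) := by
  have hdiff : Differentiable ℝ (fun s => h (x s)) :=
    (hh.differentiable one_ne_zero).comp (hx.differentiable one_ne_zero)
  intro t ht
  refine nonneg_of_deriv_right_ge_neg_comp hdiff.continuous.continuousOn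
    (fun s _ => (hdiff s).hasDerivAt.hasDerivWithinAt) hΓlip hΓ0 h0
    (fun s hs => ?_) t ⟨ht, le_rfl⟩
  linarith [hψ₁ s, hψ₁nonneg s hs.1]

/-- Induction step of the HOCBF invariance proof: if `ψ₁ = ḣ + Γ(h) ≥ 0` along
a trajectory with `h(x(0)) ≥ 0` and `Γ` a locally Lipschitz class K function,
then `h(x(t)) ≥ 0` for all `t ≥ 0`. -/
theorem hocbf_induction_step
    (n : ℕ) (h : (Fin n → ℝ) → ℝ) (x : ℝ → (Fin n → ℝ))
    (hh : ContDiff ℝ 1 h) (hx : ContDiff ℝ 1 x)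
    (Γ : ℝ → ℝ) (hΓlip : LocallyLipschitz Γ)
    (hΓmono : StrictMonoOn Γ (Set.Ici (0 : ℝ))) (hΓ0 : Γ 0 = 0)
    (ψ₁ : ℝ → ℝ)
    (hψ₁ : ∀ t, ψ₁ t = deriv (fun s => h (x s)) t + Γ (h (x t)))
    (h0 : 0 ≤ h (x 0))
    (hψ₁nonneg : ∀ t, 0 ≤ t → 0 ≤ ψ₁ t) :
    ∀ t, 0 ≤ t → 0 ≤ h (x t) :=
  hocbf_induction_step_general n h x hh hx Γ hΓlip hΓ0 ψ₁ hψ₁ h0 hψ₁nonneg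
end

section
/- Let f, g be locally Lipschitz and let u(x) be a Lipschitz continuous feedback satisfying L_f ψ_{r-1}(x) + L_g ψ_{r-1}(x) u(x) + φ(t) Γ_r(ψ_{r-1}(x)) ≥ 0 with φ continuous, φ(t) ≥ 1, and Γ_r a locally Lipschitz class K function. If ψ_{r-1}(x(t₀)) ≥ 0, then along any resulting closed-loop trajectory, ψ_{r-1}(x(t)) ≥ σ(ψ_{r-1}(x(t₀)), ∫_{t₀}^t φ(τ)dτ) ≥ 0 for all t ≥ t₀, where σ is the flow of ż = -Γ_r(z). -/
open Matrix

section Aux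

open Set Filter Topology Real

lemma locLip_compact_bound {Γ : ℝ → ℝ} (hΓ : LocallyLipschitz Γ) {S : Set ℝ}
    (hS : IsCompact S) : ∃ K : ℝ, 0 ≤ K ∧ ∀ p ∈ S, ∀ q ∈ S, |Γ p - Γ q| ≤ K * |p - q| := by

  by_contra h
  push_neg at h
  choose p hp q hq hlt using fun n : ℕ => h n (Nat.cast_nonneg n)
  obtain ⟨C, hC⟩ := hS.exists_bound_of_continuousOn hΓ.continuous.continuousOn
  have hbd : ∀ n : ℕ, 1 ≤ n → |p n - q n| ≤ (2 * C) / n := by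
    intro n hn
    have h1 : |Γ (p n) - Γ (q n)| ≤ 2 * C := by
      calc |Γ (p n) - Γ (q n)| ≤ ‖Γ (p n)‖ + ‖Γ (q n)‖ := by
            simpa [Real.norm_eq_abs] using abs_sub (Γ (p n)) (Γ (q n))
      _ ≤ 2 * C := by have := hC _ (hp n); have := hC _ (hq n); linarith
    have h2 : (n : ℝ) * |p n - q n| ≤ 2 * C := le_trans (le_of_lt (hlt n)) h1
    have hn' : (0 : ℝ) < n := by exact_mod_cast hn
    rw [le_div_iff₀ hn', mul_comm]
    exact h2
  have hdist : Tendsto (fun n => |p n - q n|) atTop (𝓝 0) := by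
    refine squeeze_zero' (Eventually.of_forall fun n => abs_nonneg _)
      (eventually_atTop.2 ⟨1, hbd⟩) ?_
    simpa using tendsto_const_div_atTop_nhds_zero_nat (2 * C)
  obtain ⟨z, hzS, φs, hφmono, hptend⟩ := hS.tendsto_subseq hp
  have hdφ : Tendsto (fun n => |p (φs n) - q (φs n)|) atTop (𝓝 0) :=
    hdist.comp hφmono.tendsto_atTop
  have hsub : Tendsto (fun n => p (φs n) - q (φs n)) atTop (𝓝 0) := by
    exact tendsto_zero_iff_abs_tendsto_zero (fun n => p (φs n) - q (φs n)) |>.mpr hdφ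
  have hqtend : Tendsto (fun n => q (φs n)) atTop (𝓝 z) := by
    have := hptend.sub hsub
    simpa using this
  obtain ⟨K₀, t, ht, hK₀⟩ := hΓ z
  have h1 : ∀ᶠ n in atTop, p (φs n) ∈ t := hptend.eventually_mem ht
  have h2 : ∀ᶠ n in atTop, q (φs n) ∈ t := hqtend.eventually_mem ht
  have h3 : ∀ᶠ n in atTop, (K₀ : ℝ) ≤ (φs n : ℝ) :=
    (tendsto_natCast_atTop_atTop.comp hφmono.tendsto_atTop).eventually_ge_atTop _
  obtain ⟨n, hn1, hn2, hn3⟩ := (h1.and (h2.and h3)).exists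
  have hlip : |Γ (p (φs n)) - Γ (q (φs n))| ≤ (K₀ : ℝ) * |p (φs n) - q (φs n)| := by
    have := hK₀.dist_le_mul _ hn1 _ hn2
    simpa [Real.dist_eq] using this
  have := hlt (φs n)
  have hmul : (K₀ : ℝ) * |p (φs n) - q (φs n)| ≤ (φs n : ℝ) * |p (φs n) - q (φs n)| :=
    mul_le_mul_of_nonneg_right hn3 (abs_nonneg _)
  linarith

lemma ode_comparison {a b : ℝ} {φ Γ f g f' g' : ℝ → ℝ}
    (hφ0 : ∀ t ∈ Set.Icc a b, 0 ≤ φ t)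
    (hφbdd : ∃ C, ∀ t ∈ Set.Icc a b, φ t ≤ C)
    (hΓ : LocallyLipschitz Γ)
    (hf : ∀ t ∈ Set.Icc a b, HasDerivAt f (f' t) t)
    (hg : ∀ t ∈ Set.Icc a b, HasDerivAt g (g' t) t)
    (hfle : ∀ t ∈ Set.Icc a b, f' t ≤ -φ t * Γ (f t))
    (hgle : ∀ t ∈ Set.Icc a b, -φ t * Γ (g t) ≤ g' t)
    (h0 : f a ≤ g a) : ∀ t ∈ Set.Icc a b, f t ≤ g t := by

  rcases lt_or_ge b a with hba | hab
  · intro t ht; exact absurd ht (by simp [Set.Icc_eq_empty_of_lt hba])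
  have hfc : ContinuousOn f (Set.Icc a b) :=
    fun t ht => (hf t ht).continuousAt.continuousWithinAt
  have hgc : ContinuousOn g (Set.Icc a b) :=
    fun t ht => (hg t ht).continuousAt.continuousWithinAt
  obtain ⟨Mf, hMf⟩ := isCompact_Icc.exists_bound_of_continuousOn hfc
  obtain ⟨Mg, hMg⟩ := isCompact_Icc.exists_bound_of_continuousOn hgc
  obtain ⟨Cφ, hCφ⟩ := hφbdd
  set M : ℝ := max Mf Mg with hM
  set C : ℝ := max Cφ 1 with hC
  have hC1 : (1:ℝ) ≤ C := le_max_right _ _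
  have hφC : ∀ t ∈ Set.Icc a b, φ t ≤ C := fun t ht => (hCφ t ht).trans (le_max_left _ _)
  obtain ⟨K, hK0, hKS⟩ := locLip_compact_bound hΓ (isCompact_Icc (a := -(M+1)) (b := M+1))
  set L : ℝ := C * K + 1 with hL
  have hL0 : 0 < L := by nlinarith
  set E : ℝ := Real.exp (L * (b - a)) with hE
  have hE0 : 0 < E := Real.exp_pos _
  have hgS : ∀ t ∈ Set.Icc a b, g t ∈ Set.Icc (-(M+1)) (M+1) := by
    intro t ht
    have := hMg t ht
    rw [Real.norm_eq_abs, abs_le] at this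
    constructor <;> [linarith [le_max_right Mf Mg]; linarith [le_max_right Mf Mg]]
  have key : ∀ ε : ℝ, 0 < ε → ε * E ≤ 1 →
      ∀ t ∈ Set.Icc a b, f t ≤ g t + ε * Real.exp (L * (t - a)) := by
    intro ε hε hεE
    set B : ℝ → ℝ := fun t => g t + ε * Real.exp (L * (t - a)) with hBdef
    set B' : ℝ → ℝ := fun t => g' t + ε * (Real.exp (L * (t - a)) * L) with hB'def
    have hB : ∀ t ∈ Set.Icc a b, HasDerivAt B (B' t) t := by
      intro t ht
      have h1 : HasDerivAt (fun t => L * (t - a)) L t := by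
        simpa using ((hasDerivAt_id t).sub_const a).const_mul L
      have h2 := (h1.exp).const_mul ε
      exact (hg t ht).add h2
    have heE : ∀ t ∈ Set.Icc a b, Real.exp (L * (t - a)) ≤ E := by
      intro t ht
      exact Real.exp_le_exp.2 (by nlinarith [ht.2, ht.1])
    intro t ht
    refine image_le_of_deriv_right_lt_deriv_boundary'
      (f := f) (f' := f') hfc
      (fun s hs => (hf s (Set.Ico_subset_Icc_self hs)).hasDerivWithinAt)
      ?_ (fun s hs => (hB s hs).continuousAt.continuousWithinAt)
      (fun s hs => (hB s (Set.Ico_subset_Icc_self hs)).hasDerivWithinAt) ?_ ht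
    · have : (0:ℝ) < ε * Real.exp (L * (a - a)) := by positivity
      simp only [hBdef]; linarith
    · intro s hs hfB
      have hsI : s ∈ Set.Icc a b := Set.Ico_subset_Icc_self hs
      set e : ℝ := Real.exp (L * (s - a)) with he
      have he0 : 0 < e := Real.exp_pos _
      have hεe1 : ε * e ≤ 1 := by
        have := heE s hsI
        nlinarith
      have hεe0 : 0 < ε * e := by positivity
      have hgmem := hgS s hsI
      have hgεmem : g s + ε * e ∈ Set.Icc (-(M+1)) (M+1) := by
        obtain ⟨hl, hr⟩ := hgmem
        have := hMg s hsI
        rw [Real.norm_eq_abs, abs_le] at this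
        constructor
        · linarith [le_max_right Mf Mg]
        · have : g s ≤ M := le_trans this.2 (by simp [hM, le_max_right])
          linarith
      have hlip := hKS _ hgεmem _ hgmem
      have hd : Γ (g s) - Γ (g s + ε * e) ≤ K * (ε * e) := by
        have h1 : |Γ (g s + ε * e) - Γ (g s)| ≤ K * |g s + ε * e - g s| := hlip
        have h2 : |g s + ε * e - g s| = ε * e := by
          rw [add_sub_cancel_left, abs_of_pos hεe0]
        rw [h2] at h1
        have := neg_abs_le (Γ (g s + ε * e) - Γ (g s))
        linarith [abs_nonneg (Γ (g s + ε * e) - Γ (g s))]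
      have hφs0 := hφ0 s hsI
      have hφsC := hφC s hsI
      have step1 : φ s * (Γ (g s) - Γ (g s + ε * e)) ≤ C * (K * (ε * e)) := by
        rcases le_or_gt (Γ (g s) - Γ (g s + ε * e)) 0 with hneg | hpos
        · have : φ s * (Γ (g s) - Γ (g s + ε * e)) ≤ 0 :=
            mul_nonpos_of_nonneg_of_nonpos hφs0 hneg
          have h0' : 0 ≤ C * (K * (ε * e)) := by positivity
          linarith
        · calc φ s * (Γ (g s) - Γ (g s + ε * e)) ≤ φ s * (K * (ε * e)) :=
                mul_le_mul_of_nonneg_left hd hφs0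
          _ ≤ C * (K * (ε * e)) := mul_le_mul_of_nonneg_right hφsC (by positivity)
      have hfB' : f s = g s + ε * e := hfB
      have hf'le := hfle s hsI
      rw [hfB'] at hf'le
      have hg'ge := hgle s hsI
      -- f' s ≤ -φ s * Γ (g s + εe) = -φ s * Γ (g s) + φ s * (Γ(g s) - Γ(g s + εe))
      --       ≤ -φ s * Γ (g s) + C K ε e < -φ s * Γ (g s) + L ε e ≤ g' s + ε * (L * e) = B' s
      have hCK : C * (K * (ε * e)) < L * (ε * e) := by
        rw [hL]; nlinarith
      show f' s < g' s + ε * (e * L)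
      nlinarith [hf'le, hg'ge, step1, hCK]
  -- now take ε → 0
  intro t ht
  by_contra hcon
  push_neg at hcon
  set δ : ℝ := f t - g t with hδ
  have hδ0 : 0 < δ := by simp [hδ]; linarith
  set ε : ℝ := min (1 / E) (δ / (2 * E)) with hεdef
  have hε0 : 0 < ε := lt_min (by positivity) (by positivity)
  have hεE : ε * E ≤ 1 := by
    have : ε ≤ 1 / E := min_le_left _ _
    rw [le_div_iff₀ hE0] at this
    linarith
  have hkey := key ε hε0 hεE t ht
  have h1 : ε * Real.exp (L * (t - a)) ≤ ε * E := by
    have : Real.exp (L * (t - a)) ≤ E := Real.exp_le_exp.2 (by nlinarith [ht.2, ht.1])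
    exact mul_le_mul_of_nonneg_left this hε0.le
  have h2 : ε * E ≤ δ / 2 := by
    have : ε ≤ δ / (2 * E) := min_le_right _ _
    calc ε * E ≤ (δ / (2 * E)) * E := mul_le_mul_of_nonneg_right this hE0.le
    _ = δ / 2 := by field_simp
  linarith

lemma sigma_nonneg {Γ : ℝ → ℝ} (hΓlip : LocallyLipschitz Γ) (hΓ0 : Γ 0 = 0)
    {σ : ℝ → ℝ → ℝ}
    (hσflow : ∀ k, 0 ≤ k → ∀ s, 0 ≤ s → HasDerivAt (σ k) (-Γ (σ k s)) s)
    (hσ0 : ∀ k, 0 ≤ k → σ k 0 = k)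
    {k : ℝ} (hk : 0 ≤ k) {s : ℝ} (hs : 0 ≤ s) : 0 ≤ σ k s := by
  have := ode_comparison (a := 0) (b := s) (φ := fun _ => 1) (Γ := Γ)
    (f := fun _ => 0) (f' := fun _ => 0) (g := σ k) (g' := fun t => -Γ (σ k t))
    (fun _ _ => zero_le_one) ⟨1, fun _ _ => le_refl 1⟩ hΓlip
    (fun t _ => hasDerivAt_const t 0)
    (fun t ht => hσflow k hk t ht.1)
    (fun t _ => by simp [hΓ0])
    (fun t _ => le_of_eq (by ring))
    (by simp only [hσ0 k hk]; exact hk)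
  exact this s ⟨hs, le_refl s⟩

end Aux

/-- Core estimate of the relaxed HOCBF theorem: under the relaxed barrier
condition `L_f ψ + L_g ψ · u + φ(t) Γ(ψ) ≥ 0` along the closed-loop trajectory,
the value `ψ(x(t))` dominates the time-reparametrized flow of `ż = -Γ(z)` and
hence stays nonnegative. -/
theorem relaxed_hocbf_comparison_bound
    (n q : ℕ)
    (ψ : (Fin n → ℝ) → ℝ)
    (Lf : (Fin n → ℝ) → ℝ) (Lg : (Fin n → ℝ) → (Fin q → ℝ))
    (u : (Fin n → ℝ) → (Fin q → ℝ)) (Lu : NNReal) (hu : LipschitzWith Lu u)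
    (φ : ℝ → ℝ) (hφcont : Continuous φ) (hφ1 : ∀ t, 1 ≤ φ t)
    (Γ : ℝ → ℝ) (hΓlip : LocallyLipschitz Γ)
    (hΓmono : StrictMonoOn Γ (Set.Ici (0 : ℝ))) (hΓ0 : Γ 0 = 0)
    (σ : ℝ → ℝ → ℝ)
    (hσ0 : ∀ k, 0 ≤ k → σ k 0 = k)
    (hσflow : ∀ k, 0 ≤ k → ∀ s, 0 ≤ s → HasDerivAt (σ k) (-Γ (σ k s)) s)
    (x : ℝ → (Fin n → ℝ)) (t₀ : ℝ)
    (hderiv : ∀ t, t₀ ≤ t →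
      HasDerivAt (fun s => ψ (x s)) (Lf (x t) + Lg (x t) ⬝ᵥ u (x t)) t)
    (hbarrier : ∀ t, t₀ ≤ t →
      0 ≤ Lf (x t) + Lg (x t) ⬝ᵥ u (x t) + φ t * Γ (ψ (x t)))
    (hinit : 0 ≤ ψ (x t₀)) :
    ∀ t, t₀ ≤ t →
      σ (ψ (x t₀)) (∫ τ in t₀..t, φ τ) ≤ ψ (x t) ∧
      0 ≤ σ (ψ (x t₀)) (∫ τ in t₀..t, φ τ) := by
  intro t ht
  set k : ℝ := ψ (x t₀) with hk
  set I : ℝ → ℝ := fun s => ∫ τ in t₀..s, φ τ with hIdef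
  have hI : ∀ s : ℝ, HasDerivAt I (φ s) s := by
    intro s
    exact intervalIntegral.integral_hasDerivAt_right
      (hφcont.intervalIntegrable t₀ s)
      (hφcont.stronglyMeasurableAtFilter _ _) hφcont.continuousAt
  have hI0 : ∀ s, t₀ ≤ s → 0 ≤ I s := by
    intro s hs
    exact intervalIntegral.integral_nonneg hs
      (fun u _ => le_trans zero_le_one (hφ1 u))
  have hIt0 : I t₀ = 0 := intervalIntegral.integral_same
  have hfd : ∀ s ∈ Set.Icc t₀ t, HasDerivAt (fun s => σ k (I s)) (-Γ (σ k (I s)) * φ s) s := by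
    intro s hs
    exact (hσflow k hinit (I s) (hI0 s hs.1)).comp s (hI s)
  obtain ⟨Cφ, hCφ⟩ := isCompact_Icc.exists_bound_of_continuousOn
    (hφcont.continuousOn (s := Set.Icc t₀ t))
  have hmain : σ k (I t) ≤ ψ (x t) := by
    have := ode_comparison (a := t₀) (b := t) (φ := φ) (Γ := Γ)
      (f := fun s => σ k (I s)) (f' := fun s => -Γ (σ k (I s)) * φ s)
      (g := fun s => ψ (x s)) (g' := fun s => Lf (x s) + Lg (x s) ⬝ᵥ u (x s))
      (fun s _ => le_trans zero_le_one (hφ1 s))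
      ⟨Cφ, fun s hs => le_trans (le_abs_self _) (hCφ s hs)⟩
      hΓlip hfd
      (fun s hs => hderiv s hs.1)
      (fun s _ => le_of_eq (by ring))
      (fun s hs => by show -φ s * Γ (ψ (x s)) ≤ Lf (x s) + Lg (x s) ⬝ᵥ u (x s); have := hbarrier s hs.1; linarith)
      (by show σ k (I t₀) ≤ ψ (x t₀); rw [hIt0, hσ0 k hinit])
    exact this t ⟨ht, le_refl t⟩
  exact ⟨hmain, sigma_nonneg hΓlip hΓ0 hσflow hσ0 hinit (hI0 t ht)⟩
end
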